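/- arXiv:quant-ph/0112103 — 3 statements merged into one kernel-verified Lean document; each statement's English description precedes it below -/
import Mathlib

section
/- For any type Q of sequences of length n over a finite alphabet X of size m, the number of sequences in X^n with type Q satisfies |T_Q^n| ≤ exp(n·H_e(Q)), where H_e is the entropy of Q computed with the natural logarithm. -/
open scoped BigOperators

/-- The number of sequences in `X^n` whose type is `Q` (given by `Q u = k u / n`,
where the `k u` are nonnegative integers summing to `n`) is at most
`exp (n * H_e(Q))`, where `H_e(Q) = -∑ u, Q u * ln (Q u)` is the entropy in nats. -/
theorem card_type_class_le {X : Type*} [Fintype X] [DecidableEq X] (n : ℕ) (hn : 0 < n)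
    (k : X → ℕ) (hk : ∑ u, k u = n) :
    ((Finset.univ.filter fun x : Fin n → X =>
        ∀ u, (Finset.univ.filter fun i => x i = u).card = k u).card : ℝ)
      ≤ Real.exp (n * (-∑ u, ((k u : ℝ) / n) * Real.log ((k u : ℝ) / n))) := by
  have hn' : (n : ℝ) ≠ 0 := Nat.cast_ne_zero.mpr hn.ne'
  set p : X → ℝ := fun u => (k u : ℝ) / n with hp
  set T := Finset.univ.filter fun x : Fin n → X =>
        ∀ u, (Finset.univ.filter fun i => x i = u).card = k u with hT
  set S : ℝ := ∑ u, (k u : ℝ) * Real.log (p u) with hS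
  have hp0 : ∀ u, 0 ≤ p u := fun u => by positivity
  -- each sequence of type Q has probability exp S
  have hprod : ∀ x ∈ T, (∏ i, p (x i)) = Real.exp S := by
    intro x hx
    rw [hT, Finset.mem_filter] at hx
    have h1 : (∏ i, p (x i)) = ∏ u, p u ^ k u := by
      rw [← Finset.prod_fiberwise_of_maps_to (g := x) (fun i _ => Finset.mem_univ (x i))]
      refine Finset.prod_congr rfl fun u _ => ?_
      calc (∏ i ∈ Finset.univ.filter fun i => x i = u, p (x i))
          = ∏ _i ∈ Finset.univ.filter fun i => x i = u, p u :=
            Finset.prod_congr rfl fun i hi => by rw [(Finset.mem_filter.mp hi).2]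
        _ = p u ^ k u := by rw [Finset.prod_const, hx.2 u]
    rw [h1, hS, Real.exp_sum]
    refine Finset.prod_congr rfl fun u _ => ?_
    rcases Nat.eq_zero_or_pos (k u) with h | h
    · simp [h]
    · have hpu : 0 < p u := by
        rw [hp]; positivity
      rw [← Real.log_pow, Real.exp_log (by positivity)]
  -- total probability is 1
  have hsum1 : (∑ x : Fin n → X, ∏ i, p (x i)) = 1 := by
    rw [← Fintype.sum_pow]
    have : (∑ u, p u) = 1 := by
      rw [hp, ← Finset.sum_div]
      rw [← Nat.cast_sum, hk, div_self hn']
    rw [this, one_pow]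
  have hle : (T.card : ℝ) * Real.exp S ≤ 1 := by
    calc (T.card : ℝ) * Real.exp S = ∑ x ∈ T, ∏ i, p (x i) := by
          rw [Finset.sum_congr rfl hprod, Finset.sum_const, nsmul_eq_mul]
      _ ≤ ∑ x : Fin n → X, ∏ i, p (x i) := by
          refine Finset.sum_le_sum_of_subset_of_nonneg (Finset.subset_univ _)
            fun x _ _ => Finset.prod_nonneg fun i _ => hp0 (x i)
      _ = 1 := hsum1
  have hgoal : Real.exp ((n : ℝ) * (-∑ u, p u * Real.log (p u))) = Real.exp (-S) := by
    congr 1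
    rw [hS, mul_neg, neg_inj, Finset.mul_sum]
    refine Finset.sum_congr rfl fun u _ => ?_
    rw [hp, ← mul_assoc, mul_div_cancel₀ _ hn']
  rw [hgoal, Real.exp_neg, ← one_div, le_div_iff₀ (Real.exp_pos S)]
  exact hle
end

section
/- Averaging-to-minimum subcode extraction: Let e : C → ℝ assign to each unit vector of a finite-dimensional inner product space C of dimension K ≥ 2 a 'failure probability' in [0,1], and suppose that for every orthonormal basis B of C, the average (1/K)·Σ_{ψ∈B} e(ψ) ≤ G, where the minimum over all orthonormal bases is attained. Then there exists a subspace D ⊆ C of dimension ⌊K/2⌋ such that every unit vector ψ ∈ D satisfies e(ψ) ≤ 2G, provided e is continuous. -/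
/-!
If the conclusion failed, every subspace of dimension `⌊K/2⌋` would contain a unit vector `ψ`
with `e ψ > 2G`. Choosing such vectors greedily, each in the orthogonal complement of the ones
already chosen (a complement of dimension at least `⌊K/2⌋` as long as fewer than
`K - ⌊K/2⌋ + 1` have been chosen), yields more than `K/2` orthonormal vectors on which `e > 2G`.
Completing them to an orthonormal basis and using `e ≥ 0` makes the average of `e` over that
basis exceed `G`.
-/

open Module

theorem Submodule.exists_le_finrank_eq {K V : Type*} [DivisionRing K] [AddCommGroup V]
    [Module K V] {W : Submodule K V} {m : ℕ} (hm : m ≤ finrank K W) :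
    ∃ D ≤ W, finrank K D = m := by
  obtain ⟨f, hf⟩ := exists_linearIndependent_of_le_finrank hm
  refine ⟨span K (Set.range (W.subtype ∘ f)), ?_, ?_⟩
  · rw [span_le, Set.range_comp]
    exact Set.image_subset_iff.2 fun x _ => x.2
  · rw [finrank_span_eq_card (hf.map' W.subtype W.ker_subtype), Fintype.card_fin]

section

variable {𝕜 E : Type*} [RCLike 𝕜] [NormedAddCommGroup E] [InnerProductSpace 𝕜 E]

theorem Orthonormal.snoc {n : ℕ} {f : Fin n → E} (hf : Orthonormal 𝕜 f) {ψ : E}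
    (hψ : ‖ψ‖ = 1) (horth : ∀ i, inner 𝕜 (f i) ψ = 0) :
    Orthonormal 𝕜 (Fin.snoc f ψ : Fin (n + 1) → E) := by
  have horth' : ∀ i, inner 𝕜 ψ (f i) = 0 := fun i => inner_eq_zero_symm.1 (horth i)
  rw [orthonormal_iff_ite] at hf ⊢
  intro i j
  induction i using Fin.lastCases <;> induction j using Fin.lastCases
  · simp [inner_self_eq_norm_sq_to_K, hψ]
  · simp [horth', (Fin.castSucc_lt_last _).ne']
  · simp [horth, (Fin.castSucc_lt_last _).ne]
  · simp [hf]

variable [FiniteDimensional 𝕜 E]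

theorem exists_orthonormal_forall_mem_of_forall_finrank_eq {S : Set E} {m : ℕ}
    (hS : ∀ D : Submodule 𝕜 E, finrank 𝕜 D = m → ∃ ψ ∈ D, ‖ψ‖ = 1 ∧ ψ ∈ S) :
    ∀ n, n + m ≤ finrank 𝕜 E + 1 → ∃ f : Fin n → E, Orthonormal 𝕜 f ∧ ∀ i, f i ∈ S := by
  intro n
  induction n with
  | zero => exact fun _ => ⟨Fin.elim0, orthonormal_iff_ite.2 (fun i => i.elim0), fun i => i.elim0⟩
  | succ n ih =>
    intro hn
    obtain ⟨f, hf, hfS⟩ := ih (by omega)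
    have hW : m ≤ finrank 𝕜 (Submodule.span 𝕜 (Set.range f))ᗮ := by
      have := (Submodule.span 𝕜 (Set.range f)).finrank_add_finrank_orthogonal
      rw [finrank_span_eq_card hf.linearIndependent, Fintype.card_fin] at this
      omega
    obtain ⟨D, hDW, hD⟩ := Submodule.exists_le_finrank_eq hW
    obtain ⟨ψ, hψD, hψ, hψS⟩ := hS D hD
    have horth : ∀ i, inner 𝕜 (f i) ψ = 0 := fun i =>
      Submodule.inner_right_of_mem_orthogonal (Submodule.subset_span (Set.mem_range_self i))
        (hDW hψD)
    exact ⟨_, hf.snoc hψ horth, Fin.lastCases (by simpa using hψS) (by simpa using hfS)⟩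

theorem Orthonormal.exists_orthonormalBasis_extension_fin {n K : ℕ} {f : Fin n → E}
    (hf : Orthonormal 𝕜 f) (hK : finrank 𝕜 E = K) (hn : n ≤ K) :
    ∃ b : OrthonormalBasis (Fin K) 𝕜 E, ∀ i, b (Fin.castLE hn i) = f i := by
  set v : Fin K → E := fun j => if h : (j : ℕ) < n then f ⟨j, h⟩ else 0
  set s : Set (Fin K) := {j | (j : ℕ) < n}
  have hv : s.domRestrict v = f ∘ fun j : s => ⟨j, j.2⟩ := by
    funext j
    exact dif_pos j.2
  obtain ⟨b, hb⟩ := Orthonormal.exists_orthonormalBasis_extension_of_card_eq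
    (by rw [hK, Fintype.card_fin]) (hv ▸ hf.comp _ fun i j hij => by ext; simpa [Fin.ext_iff] using hij)
  exact ⟨b, fun i => (hb _ i.2).trans (dif_pos i.2 : v (Fin.castLE hn i) = f i)⟩

end

theorem Fin.sum_castLE_le_sum {M : Type*} [AddCommMonoid M] [PartialOrder M]
    [IsOrderedAddMonoid M] {n K : ℕ} (hn : n ≤ K) {g : Fin K → M} (hg : ∀ j, 0 ≤ g j) :
    ∑ i : Fin n, g (Fin.castLE hn i) ≤ ∑ j, g j := by
  simpa using Finset.sum_le_sum_of_subset_of_nonneg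
    (Finset.subset_univ (Finset.univ.map (Fin.castLEEmb hn))) fun j _ _ => hg j

theorem subcode_extraction_general {C : Type*} [NormedAddCommGroup C] [InnerProductSpace ℂ C]
    [FiniteDimensional ℂ C] {K : ℕ} (hK : 2 ≤ K) (hdim : Module.finrank ℂ C = K)
    (e : C → ℝ) (he01 : ∀ ψ : C, ‖ψ‖ = 1 → e ψ ∈ Set.Icc (0 : ℝ) 1)
    (G : ℝ)
    (hG : ∀ B : OrthonormalBasis (Fin K) ℂ C, (1 / (K : ℝ)) * ∑ j, e (B j) ≤ G) :
    ∃ D : Submodule ℂ C, Module.finrank ℂ D = K / 2 ∧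
      ∀ ψ ∈ D, ‖ψ‖ = 1 → e ψ ≤ 2 * G := by
  by_contra! hbad
  set n := K - K / 2 + 1
  obtain ⟨f, hf, hfe⟩ := exists_orthonormal_forall_mem_of_forall_finrank_eq
    (S := {ψ | 2 * G < e ψ}) hbad n (by omega)
  have hnK : n ≤ K := by omega
  obtain ⟨b, hb⟩ := hf.exists_orthonormalBasis_extension_fin hdim hnK
  have he0 : ∀ j, 0 ≤ e (b j) := fun j => (he01 _ (b.orthonormal.1 j)).1
  have hf_le : ∑ i, e (f i) ≤ ∑ j, e (b j) := by
    simpa only [hb] using Fin.sum_castLE_le_sum hnK he0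
  have hf_gt : ∑ _i : Fin n, 2 * G < ∑ i, e (f i) :=
    Finset.sum_lt_sum_of_nonempty Finset.univ_nonempty fun i _ => hfe i
  have hK0 : (0 : ℝ) < K := by positivity
  have hb_le : ∑ j, e (b j) ≤ K * G := by
    have := hG b
    rw [one_div, inv_mul_le_iff₀ hK0] at this
    exact this
  have h2n : (K : ℝ) + 1 ≤ 2 * n := by norm_cast; omega
  have hsum0 : 0 ≤ ∑ j, e (b j) := Finset.sum_nonneg fun j _ => he0 j
  simp only [Finset.sum_const, Finset.card_univ, Fintype.card_fin, nsmul_eq_mul] at hf_gt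
  nlinarith

/-- Averaging-to-minimum subcode extraction: if `C` is a `K`-dimensional complex inner
product space (`K ≥ 2`) and `e` is a continuous function on `C` taking values in `[0,1]`
on unit vectors, such that for every orthonormal basis `B` of `C` the average of `e` over
`B` is at most `G`, then there is a subspace `D` of dimension `⌊K/2⌋` on which every unit
vector `ψ` satisfies `e ψ ≤ 2 * G`. -/
theorem subcode_extraction {C : Type*} [NormedAddCommGroup C] [InnerProductSpace ℂ C]
    [FiniteDimensional ℂ C] {K : ℕ} (hK : 2 ≤ K) (hdim : Module.finrank ℂ C = K)
    (e : C → ℝ) (he : Continuous e) (he01 : ∀ ψ : C, ‖ψ‖ = 1 → e ψ ∈ Set.Icc (0 : ℝ) 1)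
    (G : ℝ)
    (hG : ∀ B : OrthonormalBasis (Fin K) ℂ C, (1 / (K : ℝ)) * ∑ j, e (B j) ≤ G) :
    ∃ D : Submodule ℂ C, Module.finrank ℂ D = K / 2 ∧
      ∀ ψ ∈ D, ‖ψ‖ = 1 → e ψ ≤ 2 * G :=
  subcode_extraction_general hK hdim e he01 G hG
end

section
/- Positivity of the error exponent below the entropy bound: For a probability distribution P on a finite set X of size d², define E(R,P) = min over probability distributions Q on X of [D(Q||P) + max{1 - H(Q) - R, 0}], where entropy and divergence are in base d. Then E(R,P) > 0 whenever 0 ≤ R < 1 - H(P), and E(R,P) = 0 when R ≥ 1 - H(P). -/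
open scoped BigOperators ENNReal

/-- Entropy in base `d` of a distribution `Q` on a finite set. -/
noncomputable def entropyBase {X : Type*} [Fintype X] (d : ℕ) (Q : X → ℝ) : ℝ :=
  -∑ x, Q x * (Real.log (Q x) / Real.log d)

/-- Kullback-Leibler divergence in base `d`, valued in `ℝ≥0∞` (it is `⊤` when
`Q x > 0` but `P x = 0` for some `x`). -/
noncomputable def klDivBase {X : Type*} [Fintype X] (d : ℕ) (Q P : X → ℝ) : ℝ≥0∞ :=
  if ∃ x, 0 < Q x ∧ P x = 0 then ⊤
  else ENNReal.ofReal (∑ x, Q x * (Real.log (Q x / P x) / Real.log d))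

/-- The error exponent `E(R,P) = min_Q [D(Q‖P) + |1 - H(Q) - R|⁺]`, where `Q` ranges
over probability distributions on `X`. -/
noncomputable def errorExponent {X : Type*} [Fintype X] (d : ℕ) (R : ℝ) (P : X → ℝ) :
    ℝ≥0∞ :=
  sInf {r : ℝ≥0∞ | ∃ Q : X → ℝ, (∀ x, 0 ≤ Q x) ∧ ∑ x, Q x = 1 ∧
    r = klDivBase d Q P + ENNReal.ofReal (max (1 - entropyBase d Q - R) 0)}

section Aux
variable {X : Type*} [Fintype X]

/-- Strict Gibbs inequality (base `d`). -/
lemma gibbs_pos {d : ℕ} (hd : 2 ≤ d) (P Q : X → ℝ)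
    (hP0 : ∀ x, 0 ≤ P x) (hP1 : ∑ x, P x = 1)
    (hQ0 : ∀ x, 0 ≤ Q x) (hQ1 : ∑ x, Q x = 1)
    (hac : ∀ x, P x = 0 → Q x = 0) (hne : Q ≠ P) :
    0 < ∑ x, Q x * (Real.log (Q x / P x) / Real.log d) := by
  have hlogd : 0 < Real.log d := Real.log_pos (by exact_mod_cast hd.trans_lt' one_lt_two)
  have key : ∑ x, Q x * Real.log (P x / Q x) < ∑ x, (P x - Q x) := by
    obtain ⟨x₀, hx₀⟩ : ∃ x, Q x ≠ P x := by
      by_contra h; push_neg at h; exact hne (funext h)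
    refine Finset.sum_lt_sum (fun x _ => ?_) ⟨x₀, Finset.mem_univ x₀, ?_⟩
    · rcases eq_or_lt_of_le (hQ0 x) with h0 | h0
      · simp [← h0, hP0 x]
      · have hPx : 0 < P x := by
          rcases eq_or_lt_of_le (hP0 x) with h | h
          · exact absurd (hac x h.symm) h0.ne'
          · exact h
        have := Real.log_le_sub_one_of_pos (div_pos hPx h0)
        have h2 := mul_le_mul_of_nonneg_left this h0.le
        calc Q x * Real.log (P x / Q x) ≤ Q x * (P x / Q x - 1) := h2
          _ = P x - Q x := by field_simp
    · rcases eq_or_lt_of_le (hQ0 x₀) with h0 | h0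
      · have hPx : 0 < P x₀ := by
          rcases eq_or_lt_of_le (hP0 x₀) with h | h
          · exact (hx₀ (by rw [← h0, ← h])).elim
          · exact h
        simp [← h0, hPx]
      · have hPx : 0 < P x₀ := by
          rcases eq_or_lt_of_le (hP0 x₀) with h | h
          · exact absurd (hac x₀ h.symm) h0.ne'
          · exact h
        have hne1 : P x₀ / Q x₀ ≠ 1 := by
          intro h; apply hx₀; field_simp at h; linarith
        have := Real.log_lt_sub_one_of_pos (div_pos hPx h0) hne1
        have h2 := mul_lt_mul_of_pos_left this h0
        calc Q x₀ * Real.log (P x₀ / Q x₀) < Q x₀ * (P x₀ / Q x₀ - 1) := h2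
          _ = P x₀ - Q x₀ := by field_simp
  rw [Finset.sum_sub_distrib, hP1, hQ1, sub_self] at key
  have hpos : 0 < ∑ x, Q x * Real.log (Q x / P x) := by
    have : ∑ x, Q x * Real.log (Q x / P x) = -∑ x, Q x * Real.log (P x / Q x) := by
      rw [← Finset.sum_neg_distrib]
      refine Finset.sum_congr rfl fun x _ => ?_
      rw [show Q x / P x = (P x / Q x)⁻¹ from (inv_div _ _).symm, Real.log_inv]
      ring
    rw [this]; linarith
  have : ∑ x, Q x * (Real.log (Q x / P x) / Real.log d)
      = (∑ x, Q x * Real.log (Q x / P x)) * (Real.log d)⁻¹ := by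
    rw [Finset.sum_mul]
    exact Finset.sum_congr rfl fun x _ => by ring
  rw [this]
  exact mul_pos hpos (inv_pos.2 hlogd)

/-- The divergence sum at `Q = P` is zero. -/
lemma gibbs_self {d : ℕ} (P : X → ℝ) (hP0 : ∀ x, 0 ≤ P x) :
    ∑ x, P x * (Real.log (P x / P x) / Real.log d) = 0 := by
  refine Finset.sum_eq_zero fun x _ => ?_
  rcases eq_or_lt_of_le (hP0 x) with h | h
  · simp [← h]
  · rw [div_self h.ne', Real.log_one]; simp

lemma uniform_min_aux {d : ℕ} (hd : 2 ≤ d) (P : X → ℝ)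
    (hP0 : ∀ x, 0 ≤ P x) (hP1 : ∑ x, P x = 1) {R : ℝ} (hR : R < 1 - entropyBase d P)
    (gibbs_pos : ∀ Q : X → ℝ, (∀ x, 0 ≤ Q x) → ∑ x, Q x = 1 → (∀ x, P x = 0 → Q x = 0) →
      Q ≠ P → 0 < ∑ x, Q x * (Real.log (Q x / P x) / Real.log d))
    (gibbs_self : ∑ x, P x * (Real.log (P x / P x) / Real.log d) = 0) :
    ∃ ε : ℝ, 0 < ε ∧ ∀ Q : X → ℝ, (∀ x, 0 ≤ Q x) → ∑ x, Q x = 1 →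
      (∀ x, P x = 0 → Q x = 0) →
      ε ≤ (∑ x, Q x * (Real.log (Q x / P x) / Real.log d))
            + max (1 - entropyBase d Q - R) 0 := by
  have hlogd : Real.log d ≠ 0 :=
    (Real.log_pos (by exact_mod_cast hd.trans_lt' one_lt_two)).ne'
  set S : (X → ℝ) → ℝ := fun Q => ∑ x, Q x * (Real.log (Q x / P x) / Real.log d) with hS
  set g : (X → ℝ) → ℝ := fun Q => S Q + max (1 - entropyBase d Q - R) 0 with hg
  have hScont : Continuous S := by
    refine continuous_finset_sum _ fun x _ => ?_
    by_cases hx : P x = 0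
    · simp only [hx, div_zero, Real.log_zero, zero_div, mul_zero]
      exact continuous_const
    · have heq : (fun Q : X → ℝ => Q x * (Real.log (Q x / P x) / Real.log (d : ℝ)))
          = fun Q => ((Q x / P x) * Real.log (Q x / P x)) * (P x / Real.log d) := by
        funext Q; field_simp
      rw [heq]
      exact (Real.continuous_mul_log.comp ((continuous_apply x).div_const _)).mul
        continuous_const
  have hHcont : Continuous fun Q : X → ℝ => entropyBase d Q := by
    have heq : (fun Q : X → ℝ => entropyBase d Q)
        = fun Q => -∑ x, (Q x * Real.log (Q x)) * (Real.log d)⁻¹ := by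
      funext Q
      simp only [entropyBase]
      congr 1
      exact Finset.sum_congr rfl fun x _ => by ring
    rw [heq]
    exact (continuous_finset_sum _ fun x _ =>
      (Real.continuous_mul_log.comp (continuous_apply x)).mul continuous_const).neg
  have hgcont : Continuous g :=
    hScont.add (((continuous_const.sub hHcont).sub continuous_const).max continuous_const)
  set s : Set (X → ℝ) := {Q | ∀ x, 0 ≤ Q x} ∩ {Q | ∑ x, Q x = 1}
      ∩ {Q | ∀ x, P x = 0 → Q x = 0} with hsdef
  have hPs : P ∈ s := ⟨⟨hP0, hP1⟩, fun x h => h⟩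
  have hclosed : IsClosed s := by
    refine IsClosed.inter (IsClosed.inter ?_ ?_) ?_
    · rw [Set.setOf_forall]
      exact isClosed_iInter fun x => isClosed_le continuous_const (continuous_apply x)
    · exact isClosed_eq (continuous_finset_sum _ fun x _ => continuous_apply x)
        continuous_const
    · rw [Set.setOf_forall]
      refine isClosed_iInter fun x => ?_
      by_cases h : P x = 0
      · simp only [h, forall_true_left]
        exact isClosed_eq (continuous_apply x) continuous_const
      · simp only [h, false_implies]
        exact isClosed_univ
  have hcomp : IsCompact s := by
    refine (isCompact_univ_pi fun _ : X => isCompact_Icc (a := (0:ℝ)) (b := 1)).of_isClosed_subset hclosed ?_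
    intro Q hQ
    rw [Set.mem_univ_pi]
    intro x
    refine ⟨hQ.1.1 x, ?_⟩
    rw [← hQ.1.2]
    exact Finset.single_le_sum (fun i _ => hQ.1.1 i) (Finset.mem_univ x)
  obtain ⟨Q₀, hQ₀s, hmin⟩ := hcomp.exists_isMinOn ⟨P, hPs⟩ hgcont.continuousOn
  refine ⟨g Q₀, ?_, fun Q h1 h2 h3 => isMinOn_iff.mp hmin Q ⟨⟨h1, h2⟩, h3⟩⟩
  by_cases hQP : Q₀ = P
  · have h1 : S P = 0 := gibbs_self
    have h2 := le_max_left (1 - entropyBase d P - R) 0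
    have : g P = S P + max (1 - entropyBase d P - R) 0 := rfl
    rw [hQP, this, h1, zero_add]
    linarith
  · have h1 := gibbs_pos Q₀ hQ₀s.1.1 hQ₀s.1.2 hQ₀s.2 hQP
    have h2 := le_max_right (1 - entropyBase d Q₀ - R) 0
    have : g Q₀ = S Q₀ + max (1 - entropyBase d Q₀ - R) 0 := rfl
    rw [this]
    linarith

end Aux

/-- Positivity of the error exponent below the entropy bound: for a probability
distribution `P` on a set of size `d²`, `E(R,P) > 0` whenever `0 ≤ R < 1 - H(P)`,
and `E(R,P) = 0` when `R ≥ 1 - H(P)`. -/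
theorem errorExponent_pos_iff {X : Type*} [Fintype X] (d : ℕ) (hd : 2 ≤ d)
    (hcard : Fintype.card X = d ^ 2) (P : X → ℝ)
    (hP0 : ∀ x, 0 ≤ P x) (hP1 : ∑ x, P x = 1) (R : ℝ) :
    (0 ≤ R → R < 1 - entropyBase d P → 0 < errorExponent d R P) ∧
    (1 - entropyBase d P ≤ R → errorExponent d R P = 0) := by
  constructor
  · intro _ hR2
    obtain ⟨ε, hε, hbound⟩ := uniform_min_aux hd P hP0 hP1 hR2
      (fun Q h1 h2 h3 h4 => gibbs_pos hd P Q hP0 hP1 h1 h2 h3 h4) (gibbs_self P hP0)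
    rw [errorExponent]
    refine lt_of_lt_of_le (ENNReal.ofReal_pos.mpr hε) (le_sInf ?_)
    rintro r ⟨Q, hQ0, hQ1, rfl⟩
    by_cases hbad : ∃ x, 0 < Q x ∧ P x = 0
    · rw [klDivBase, if_pos hbad, top_add]; exact le_top
    · have h3 : ∀ x, P x = 0 → Q x = 0 := fun x hx => by
        by_contra h
        exact hbad ⟨x, lt_of_le_of_ne (hQ0 x) (Ne.symm h), hx⟩
      rw [klDivBase, if_neg hbad]
      calc ENNReal.ofReal ε
          ≤ ENNReal.ofReal ((∑ x, Q x * (Real.log (Q x / P x) / Real.log d))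
              + max (1 - entropyBase d Q - R) 0) :=
            ENNReal.ofReal_le_ofReal (hbound Q hQ0 hQ1 h3)
        _ ≤ _ := ENNReal.ofReal_add_le
  · intro hR
    have h0 : (0 : ℝ≥0∞) ∈ {r : ℝ≥0∞ | ∃ Q : X → ℝ, (∀ x, 0 ≤ Q x) ∧ ∑ x, Q x = 1 ∧
        r = klDivBase d Q P + ENNReal.ofReal (max (1 - entropyBase d Q - R) 0)} := by
      refine ⟨P, hP0, hP1, ?_⟩
      have hnb : ¬ ∃ x, 0 < P x ∧ P x = 0 := by
        rintro ⟨x, h1, h2⟩; rw [h2] at h1; exact lt_irrefl _ h1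
      rw [klDivBase, if_neg hnb, gibbs_self P hP0, max_eq_right (by linarith),
        ENNReal.ofReal_zero, zero_add]
    rw [errorExponent]
    exact le_zero_iff.mp (sInf_le h0)
end
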